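/- Let u be a utility function assigning a nonnegative real u(S,E) to each subset S of projects and budgeting scenario E, satisfying u(∅,E)=0 and cost consistency (for every E there is k>0 with u({a},E)=k·c(a) for all projects a). Then every budgeting method r that always returns a min-optimal feasible bundle (with respect to u), and likewise every method that always returns a prod-optimal feasible bundle, violates discount monotonicity: there exist a budgeting scenario E and a project b ∈ r(E) such that b ∉ r(E'), where E' is obtained from E by decreasing the cost of b by exactly 1. (A witness family is given by A={x_1,x_2,y}, c(x_2)=3, c(y)=4, l=8, voter 1 approving {x_1,x_2} and voter 2 approving {y}, with c(x_1) ∈ {4,3}: x_1 lies in every min-optimal (prod-optimal) bundle when c(x_1)=4, and in no min-optimal (prod-optimal) bundle when c(x_1)=2.) -/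
import Mathlib


open Finset

/-- A participatory budgeting scenario `E = (A, V, c, l)`. -/
structure Scenario (α ι : Type*) [DecidableEq α] where
  projects : Finset α
  voters : Finset ι
  voters_nonempty : voters.Nonempty
  cost : α → ℕ
  budget : ℕ
  approval : ι → Finset α
  approval_subset : ∀ i ∈ voters, approval i ⊆ projects
  approval_feasible : ∀ i ∈ voters, ∑ a ∈ approval i, cost a ≤ budget

variable {α ι : Type*} [DecidableEq α]

/-- A bundle is feasible if it consists of projects and fits in the budget. -/
def Feasible (E : Scenario α ι) (B : Finset α) : Prop :=
  B ⊆ E.projects ∧ ∑ a ∈ B, E.cost a ≤ E.budget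

/-- The minimum over all voters of the satisfaction `u (Aᵢ ∩ B)`. -/
noncomputable def minScore (E : Scenario α ι) (u : Finset α → ℝ) (B : Finset α) : ℝ :=
  E.voters.inf' E.voters_nonempty (fun i => u (E.approval i ∩ B))

/-- A feasible bundle maximizing the minimum of voters' satisfactions. -/
def IsMinOptimal (E : Scenario α ι) (u : Finset α → ℝ) (B : Finset α) : Prop :=
  Feasible E B ∧ ∀ C, Feasible E C → minScore E u C ≤ minScore E u B

/-- The product over all voters of the satisfaction `u (Aᵢ ∩ B)`. -/
noncomputable def prodScore (E : Scenario α ι) (u : Finset α → ℝ) (B : Finset α) : ℝ :=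
  ∏ i ∈ E.voters, u (E.approval i ∩ B)

/-- A feasible bundle maximizing the product of voters' satisfactions. -/
def IsProdOptimal (E : Scenario α ι) (u : Finset α → ℝ) (B : Finset α) : Prop :=
  Feasible E B ∧ ∀ C, Feasible E C → prodScore E u C ≤ prodScore E u B

/-- `E'` is obtained from `E` by decreasing the cost of project `b` by exactly `1`,
everything else being unchanged. -/
def Discounted (E E' : Scenario α ι) (b : α) : Prop :=
  E'.projects = E.projects ∧ E'.voters = E.voters ∧ E'.budget = E.budget ∧
    E'.approval = E.approval ∧ E'.cost b + 1 = E.cost b ∧ ∀ a, a ≠ b → E'.cost a = E.cost a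

-- auxiliary scenario
def Sc (m : ℕ) (hm : m ≤ 5) : Scenario (Fin 3) (Fin 2) where
  projects := Finset.univ
  voters := Finset.univ
  voters_nonempty := Finset.univ_nonempty
  cost := ![m, 3, 4]
  budget := 8
  approval := ![{0, 1}, {2}]
  approval_subset := fun _ _ => Finset.subset_univ _
  approval_feasible := by
    intro i _
    fin_cases i <;> simp <;> omega

lemma inf'_fin2 (f : Fin 2 → ℝ) (h : (univ : Finset (Fin 2)).Nonempty) :
    univ.inf' h f = min (f 0) (f 1) := by
  refine le_antisymm (le_min (Finset.inf'_le _ (mem_univ 0)) (Finset.inf'_le _ (mem_univ 1))) ?_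
  apply Finset.le_inf'
  intro i _
  fin_cases i
  · exact min_le_left _ _
  · exact min_le_right _ _

lemma minScore_Sc (m : ℕ) (hm : m ≤ 5) (u : Finset (Fin 3) → ℝ) (B : Finset (Fin 3)) :
    minScore (Sc m hm) u B = min (u ({0, 1} ∩ B)) (u ({2} ∩ B)) := by
  exact inf'_fin2 _ _

lemma prodScore_Sc (m : ℕ) (hm : m ≤ 5) (u : Finset (Fin 3) → ℝ) (B : Finset (Fin 3)) :
    prodScore (Sc m hm) u B = u ({0, 1} ∩ B) * u ({2} ∩ B) := by
  exact Fin.prod_univ_two _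

lemma inter01_1 {B : Finset (Fin 3)} (h0 : 0 ∉ B) (h1 : 1 ∈ B) :
    ({0, 1} : Finset (Fin 3)) ∩ B = {1} := by
  ext a; fin_cases a <;> simp [h0, h1]

lemma inter01_none {B : Finset (Fin 3)} (h0 : 0 ∉ B) (h1 : 1 ∉ B) :
    ({0, 1} : Finset (Fin 3)) ∩ B = ∅ := by
  ext a; fin_cases a <;> simp [h0, h1]

lemma inter01_0 {B : Finset (Fin 3)} (h0 : 0 ∈ B) (h1 : 1 ∉ B) :
    ({0, 1} : Finset (Fin 3)) ∩ B = {0} := by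
  ext a; fin_cases a <;> simp [h0, h1]

lemma inter2_in {B : Finset (Fin 3)} (h2 : 2 ∈ B) :
    ({2} : Finset (Fin 3)) ∩ B = {2} := by
  ext a; fin_cases a <;> simp [h2]

lemma inter2_none {B : Finset (Fin 3)} (h2 : 2 ∉ B) :
    ({2} : Finset (Fin 3)) ∩ B = ∅ := by
  ext a; fin_cases a <;> simp [h2]

section Key
variable {u : Scenario (Fin 3) (Fin 2) → Finset (Fin 3) → ℝ}

lemma key_min4 (hm : (4:ℕ) ≤ 5)
    (hzero : ∀ E, u E ∅ = 0) (hnonneg : ∀ E S, 0 ≤ u E S)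
    (hcc : ∃ k : ℝ, 0 < k ∧ ∀ a ∈ (Sc 4 hm).projects, u (Sc 4 hm) {a} = k * (Sc 4 hm).cost a)
    {B : Finset (Fin 3)} (hB : IsMinOptimal (Sc 4 hm) (u (Sc 4 hm)) B) : 0 ∈ B := by
  obtain ⟨k, hk, hval⟩ := hcc
  by_contra h0
  obtain ⟨hBf, hopt⟩ := hB
  have hfeas : Feasible (Sc 4 hm) {0, 2} := ⟨Finset.subset_univ _, by simp [Sc]⟩
  have h := hopt _ hfeas
  rw [minScore_Sc, minScore_Sc,
    show ({0,1} : Finset (Fin 3)) ∩ {0,2} = {0} from by decide,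
    show ({2} : Finset (Fin 3)) ∩ {0,2} = {2} from by decide] at h
  have v0 : u (Sc 4 hm) {0} = k * 4 := by
    have := hval 0 (Finset.mem_univ _)
    rw [show (Sc 4 hm).cost 0 = 4 from rfl] at this
    exact_mod_cast this
  have v1 : u (Sc 4 hm) {1} = k * 3 := by
    have := hval 1 (Finset.mem_univ _)
    rw [show (Sc 4 hm).cost 1 = 3 from rfl] at this
    exact_mod_cast this
  have v2 : u (Sc 4 hm) {2} = k * 4 := by
    have := hval 2 (Finset.mem_univ _)
    rw [show (Sc 4 hm).cost 2 = 4 from rfl] at this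
    exact_mod_cast this
  rw [v0, v2, min_self] at h
  have hle : u (Sc 4 hm) ({0,1} ∩ B) ≤ k * 3 := by
    by_cases h1 : (1 : Fin 3) ∈ B
    · rw [inter01_1 h0 h1, v1]
    · rw [inter01_none h0 h1, hzero]; nlinarith
  have := min_le_left (u (Sc 4 hm) ({0,1} ∩ B)) (u (Sc 4 hm) ({2} ∩ B))
  nlinarith

lemma key_min2 (hm : (2:ℕ) ≤ 5)
    (hzero : ∀ E, u E ∅ = 0) (hnonneg : ∀ E S, 0 ≤ u E S)
    (hcc : ∃ k : ℝ, 0 < k ∧ ∀ a ∈ (Sc 2 hm).projects, u (Sc 2 hm) {a} = k * (Sc 2 hm).cost a)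
    {B : Finset (Fin 3)} (hB : IsMinOptimal (Sc 2 hm) (u (Sc 2 hm)) B) : 0 ∉ B := by
  obtain ⟨k, hk, hval⟩ := hcc
  intro h0
  obtain ⟨hBf, hopt⟩ := hB
  have hfeas : Feasible (Sc 2 hm) {1, 2} := ⟨Finset.subset_univ _, by simp [Sc]⟩
  have h := hopt _ hfeas
  rw [minScore_Sc, minScore_Sc,
    show ({0,1} : Finset (Fin 3)) ∩ {1,2} = {1} from by decide,
    show ({2} : Finset (Fin 3)) ∩ {1,2} = {2} from by decide] at h
  have v0 : u (Sc 2 hm) {0} = k * 2 := by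
    have := hval 0 (Finset.mem_univ _)
    rw [show (Sc 2 hm).cost 0 = 2 from rfl] at this
    exact_mod_cast this
  have v1 : u (Sc 2 hm) {1} = k * 3 := by
    have := hval 1 (Finset.mem_univ _)
    rw [show (Sc 2 hm).cost 1 = 3 from rfl] at this
    exact_mod_cast this
  have v2 : u (Sc 2 hm) {2} = k * 4 := by
    have := hval 2 (Finset.mem_univ _)
    rw [show (Sc 2 hm).cost 2 = 4 from rfl] at this
    exact_mod_cast this
  rw [v1, v2] at h
  have hmin : min (k * 3) (k * 4) = k * 3 := by
    apply min_eq_left; nlinarith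
  rw [hmin] at h
  -- B cannot contain all of 0, 1, 2
  have hnotall : (1 : Fin 3) ∉ B ∨ (2 : Fin 3) ∉ B := by
    by_contra hc
    push_neg at hc
    have hsub : ({0, 1, 2} : Finset (Fin 3)) ⊆ B := by
      simp [Finset.insert_subset_iff, h0, hc.1, hc.2]
    have hs := Finset.sum_le_sum_of_subset (f := (Sc 2 hm).cost) hsub
    have hs2 : ∑ a ∈ ({0,1,2} : Finset (Fin 3)), (Sc 2 hm).cost a = 9 := by simp [Sc]
    have hb := hBf.2
    rw [show (Sc 2 hm).budget = 8 from rfl] at hb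
    omega
  rcases hnotall with h1 | h2
  · have : u (Sc 2 hm) ({0,1} ∩ B) = k * 2 := by rw [inter01_0 h0 h1, v0]
    have hml := min_le_left (u (Sc 2 hm) ({0,1} ∩ B)) (u (Sc 2 hm) ({2} ∩ B))
    nlinarith
  · have : u (Sc 2 hm) ({2} ∩ B) = 0 := by rw [inter2_none h2, hzero]
    have hmr := min_le_right (u (Sc 2 hm) ({0,1} ∩ B)) (u (Sc 2 hm) ({2} ∩ B))
    nlinarith

lemma key_prod4 (hm : (4:ℕ) ≤ 5)
    (hzero : ∀ E, u E ∅ = 0) (hnonneg : ∀ E S, 0 ≤ u E S)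
    (hcc : ∃ k : ℝ, 0 < k ∧ ∀ a ∈ (Sc 4 hm).projects, u (Sc 4 hm) {a} = k * (Sc 4 hm).cost a)
    {B : Finset (Fin 3)} (hB : IsProdOptimal (Sc 4 hm) (u (Sc 4 hm)) B) : 0 ∈ B := by
  obtain ⟨k, hk, hval⟩ := hcc
  by_contra h0
  obtain ⟨hBf, hopt⟩ := hB
  have hfeas : Feasible (Sc 4 hm) {0, 2} := ⟨Finset.subset_univ _, by simp [Sc]⟩
  have h := hopt _ hfeas
  rw [prodScore_Sc, prodScore_Sc,
    show ({0,1} : Finset (Fin 3)) ∩ {0,2} = {0} from by decide,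
    show ({2} : Finset (Fin 3)) ∩ {0,2} = {2} from by decide] at h
  have v0 : u (Sc 4 hm) {0} = k * 4 := by
    have := hval 0 (Finset.mem_univ _)
    rw [show (Sc 4 hm).cost 0 = 4 from rfl] at this
    exact_mod_cast this
  have v1 : u (Sc 4 hm) {1} = k * 3 := by
    have := hval 1 (Finset.mem_univ _)
    rw [show (Sc 4 hm).cost 1 = 3 from rfl] at this
    exact_mod_cast this
  have v2 : u (Sc 4 hm) {2} = k * 4 := by
    have := hval 2 (Finset.mem_univ _)
    rw [show (Sc 4 hm).cost 2 = 4 from rfl] at this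
    exact_mod_cast this
  rw [v0, v2] at h
  have hle1 : u (Sc 4 hm) ({0,1} ∩ B) ≤ k * 3 := by
    by_cases h1 : (1 : Fin 3) ∈ B
    · rw [inter01_1 h0 h1, v1]
    · rw [inter01_none h0 h1, hzero]; nlinarith
  have hle2 : u (Sc 4 hm) ({2} ∩ B) ≤ k * 4 := by
    by_cases h2 : (2 : Fin 3) ∈ B
    · rw [inter2_in h2, v2]
    · rw [inter2_none h2, hzero]; nlinarith
  have hn1 := hnonneg (Sc 4 hm) ({0,1} ∩ B)
  have hn2 := hnonneg (Sc 4 hm) ({2} ∩ B)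
  nlinarith

lemma key_prod2 (hm : (2:ℕ) ≤ 5)
    (hzero : ∀ E, u E ∅ = 0) (hnonneg : ∀ E S, 0 ≤ u E S)
    (hcc : ∃ k : ℝ, 0 < k ∧ ∀ a ∈ (Sc 2 hm).projects, u (Sc 2 hm) {a} = k * (Sc 2 hm).cost a)
    {B : Finset (Fin 3)} (hB : IsProdOptimal (Sc 2 hm) (u (Sc 2 hm)) B) : 0 ∉ B := by
  obtain ⟨k, hk, hval⟩ := hcc
  intro h0
  obtain ⟨hBf, hopt⟩ := hB
  have hfeas : Feasible (Sc 2 hm) {1, 2} := ⟨Finset.subset_univ _, by simp [Sc]⟩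
  have h := hopt _ hfeas
  rw [prodScore_Sc, prodScore_Sc,
    show ({0,1} : Finset (Fin 3)) ∩ {1,2} = {1} from by decide,
    show ({2} : Finset (Fin 3)) ∩ {1,2} = {2} from by decide] at h
  have v0 : u (Sc 2 hm) {0} = k * 2 := by
    have := hval 0 (Finset.mem_univ _)
    rw [show (Sc 2 hm).cost 0 = 2 from rfl] at this
    exact_mod_cast this
  have v1 : u (Sc 2 hm) {1} = k * 3 := by
    have := hval 1 (Finset.mem_univ _)
    rw [show (Sc 2 hm).cost 1 = 3 from rfl] at this
    exact_mod_cast this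
  have v2 : u (Sc 2 hm) {2} = k * 4 := by
    have := hval 2 (Finset.mem_univ _)
    rw [show (Sc 2 hm).cost 2 = 4 from rfl] at this
    exact_mod_cast this
  rw [v1, v2] at h
  have hnotall : (1 : Fin 3) ∉ B ∨ (2 : Fin 3) ∉ B := by
    by_contra hc
    push_neg at hc
    have hsub : ({0, 1, 2} : Finset (Fin 3)) ⊆ B := by
      simp [Finset.insert_subset_iff, h0, hc.1, hc.2]
    have hs := Finset.sum_le_sum_of_subset (f := (Sc 2 hm).cost) hsub
    have hs2 : ∑ a ∈ ({0,1,2} : Finset (Fin 3)), (Sc 2 hm).cost a = 9 := by simp [Sc]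
    have hb := hBf.2
    rw [show (Sc 2 hm).budget = 8 from rfl] at hb
    omega
  have hn1 := hnonneg (Sc 2 hm) ({0,1} ∩ B)
  have hn2 := hnonneg (Sc 2 hm) ({2} ∩ B)
  rcases hnotall with h1 | h2
  · have e1 : u (Sc 2 hm) ({0,1} ∩ B) = k * 2 := by rw [inter01_0 h0 h1, v0]
    have hle2 : u (Sc 2 hm) ({2} ∩ B) ≤ k * 4 := by
      by_cases h2 : (2 : Fin 3) ∈ B
      · rw [inter2_in h2, v2]
      · rw [inter2_none h2, hzero]; nlinarith
    nlinarith
  · have e2 : u (Sc 2 hm) ({2} ∩ B) = 0 := by rw [inter2_none h2, hzero]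
    nlinarith

end Key

/-- For any utility function with `u(∅,E) = 0`, nonnegativity and cost consistency,
every budgeting method always returning a min-optimal feasible bundle, and likewise every
method always returning a prod-optimal feasible bundle, violates discount monotonicity:
there exist a scenario `E` and a project `b ∈ r(E)` with `b ∉ r(E')`, where `E'` is `E`
with the cost of `b` decreased by exactly `1`. -/
theorem min_prod_rules_violate_discount_monotonicity
    (u : Scenario (Fin 3) (Fin 2) → Finset (Fin 3) → ℝ)
    (hzero : ∀ E, u E ∅ = 0)
    (hnonneg : ∀ E S, 0 ≤ u E S)
    (hcc : ∀ E : Scenario (Fin 3) (Fin 2),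
      ∃ k : ℝ, 0 < k ∧ ∀ a ∈ E.projects, u E {a} = k * E.cost a) :
    (∀ r : Scenario (Fin 3) (Fin 2) → Finset (Fin 3),
      (∀ F, IsMinOptimal F (u F) (r F)) →
      ∃ E E' b, Discounted E E' b ∧ b ∈ r E ∧ b ∉ r E') ∧
    (∀ r : Scenario (Fin 3) (Fin 2) → Finset (Fin 3),
      (∀ F, IsProdOptimal F (u F) (r F)) →
      ∃ E E' b, Discounted E E' b ∧ b ∈ r E ∧ b ∉ r E') := by
  have hm4 : (4:ℕ) ≤ 5 := by norm_num
  have hm3 : (3:ℕ) ≤ 5 := by norm_num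
  have hm2 : (2:ℕ) ≤ 5 := by norm_num
  have hdisc43 : Discounted (Sc 4 hm4) (Sc 3 hm3) 0 := by
    refine ⟨rfl, rfl, rfl, rfl, rfl, ?_⟩
    intro a ha
    fin_cases a
    · exact absurd rfl ha
    · rfl
    · rfl
  have hdisc32 : Discounted (Sc 3 hm3) (Sc 2 hm2) 0 := by
    refine ⟨rfl, rfl, rfl, rfl, rfl, ?_⟩
    intro a ha
    fin_cases a
    · exact absurd rfl ha
    · rfl
    · rfl
  constructor
  · intro r hr
    have h4 : 0 ∈ r (Sc 4 hm4) := key_min4 hm4 hzero hnonneg (hcc _) (hr _)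
    have h2 : 0 ∉ r (Sc 2 hm2) := key_min2 hm2 hzero hnonneg (hcc _) (hr _)
    by_cases h3 : 0 ∈ r (Sc 3 hm3)
    · exact ⟨_, _, 0, hdisc32, h3, h2⟩
    · exact ⟨_, _, 0, hdisc43, h4, h3⟩
  · intro r hr
    have h4 : 0 ∈ r (Sc 4 hm4) := key_prod4 hm4 hzero hnonneg (hcc _) (hr _)
    have h2 : 0 ∉ r (Sc 2 hm2) := key_prod2 hm2 hzero hnonneg (hcc _) (hr _)
    by_cases h3 : 0 ∈ r (Sc 3 hm3)
    · exact ⟨_, _, 0, hdisc32, h3, h2⟩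
    · exact ⟨_, _, 0, hdisc43, h4, h3⟩
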